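/- Let G and H be groups and X a subgroup of G × H. Let p₁ : G × H → G be the first projection, and set k₁(X) := {g ∈ G | (g,1) ∈ X} and k₂(X) := {h ∈ H | (1,h) ∈ X}. Then k₁(X) × k₂(X) is a normal subgroup of X, and the restriction of p₁ to X induces a group isomorphism X/(k₁(X) × k₂(X)) ≅ p₁(X)/k₁(X). -/
import Mathlib


section

variable {G H : Type*} [Group G] [Group H]

/-- `k₁(X) = {g ∈ G | (g,1) ∈ X}`. -/
def k1 (X : Subgroup (G × H)) : Subgroup G := X.comap (MonoidHom.inl G H)

/-- `k₂(X) = {h ∈ H | (1,h) ∈ X}`. -/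
def k2 (X : Subgroup (G × H)) : Subgroup H := X.comap (MonoidHom.inr G H)

/-- `p₁(X)`, the image of `X` under the first projection. -/
def p1 (X : Subgroup (G × H)) : Subgroup G := X.map (MonoidHom.fst G H)

instance k1_normal (X : Subgroup (G × H)) : ((k1 X).subgroupOf (p1 X)).Normal := by
  constructor
  intro n hn g
  rw [Subgroup.mem_subgroupOf] at hn ⊢
  simp only [k1, Subgroup.mem_comap, MonoidHom.inl_apply] at hn ⊢
  obtain ⟨x, hx, hgx⟩ := g.2
  have key : ((((g * n * g⁻¹ : ↥(p1 X)) : G)), (1 : H)) = x * (((n : G)), (1 : H)) * x⁻¹ := by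
    ext
    · replace hgx : x.1 = (g : G) := hgx
      simp [hgx]
    · simp
  rw [key]
  exact X.mul_mem (X.mul_mem hx hn) (X.inv_mem hx)

instance prod_kernels_normal (X : Subgroup (G × H)) :
    (((k1 X).prod (k2 X)).subgroupOf X).Normal := by
  constructor
  intro n hn g
  rw [Subgroup.mem_subgroupOf] at hn ⊢
  simp only [k1, k2, Subgroup.mem_prod, Subgroup.mem_comap, MonoidHom.inl_apply,
    MonoidHom.inr_apply] at hn ⊢
  obtain ⟨hn1, hn2⟩ := hn
  constructor
  · have key : (((g * n * g⁻¹ : ↥X) : G × H).1, (1 : H))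
        = (g : G × H) * (((n : G × H).1, (1 : H))) * (g : G × H)⁻¹ := by
      ext <;> simp
    rw [key]
    exact X.mul_mem (X.mul_mem g.2 hn1) (X.inv_mem g.2)
  · have key : ((1 : G), ((g * n * g⁻¹ : ↥X) : G × H).2)
        = (g : G × H) * (((1 : G), ((n : G × H).2))) * (g : G × H)⁻¹ := by
      ext <;> simp
    rw [key]
    exact X.mul_mem (X.mul_mem g.2 hn2) (X.inv_mem g.2)

/-- `k₁(X) × k₂(X)` is a normal subgroup of `X`, and the first projection induces a group
isomorphism `X/(k₁(X) × k₂(X)) ≅ p₁(X)/k₁(X)`. -/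
theorem quotient_iso_of_subgroup_of_prod (X : Subgroup (G × H)) :
    (((k1 X).prod (k2 X)).subgroupOf X).Normal ∧
    ∃ e : (↥X ⧸ ((k1 X).prod (k2 X)).subgroupOf X) ≃*
        (↥(p1 X) ⧸ (k1 X).subgroupOf (p1 X)),
      ∀ x : ↥X, e (QuotientGroup.mk x) =
        QuotientGroup.mk ⟨((x : G × H)).1, Subgroup.mem_map_of_mem (MonoidHom.fst G H) x.2⟩ := by
  refine ⟨inferInstance, ?_⟩
  let g : ↥X →* ↥(p1 X) :=
    { toFun := fun x => ⟨(x : G × H).1, Subgroup.mem_map_of_mem (MonoidHom.fst G H) x.2⟩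
      map_one' := rfl
      map_mul' := fun _ _ => rfl }
  let f : ↥X →* (↥(p1 X) ⧸ (k1 X).subgroupOf (p1 X)) :=
    (QuotientGroup.mk' _).comp g
  have hsurj : Function.Surjective f := by
    intro q
    obtain ⟨y, rfl⟩ := QuotientGroup.mk_surjective q
    obtain ⟨x, hx, hxy⟩ := y.2
    exact ⟨⟨x, hx⟩, congrArg QuotientGroup.mk (Subtype.ext hxy)⟩
  have hker : f.ker = ((k1 X).prod (k2 X)).subgroupOf X := by
    ext x
    rw [MonoidHom.mem_ker, Subgroup.mem_subgroupOf]
    simp only [f, MonoidHom.comp_apply, QuotientGroup.mk'_apply,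
      QuotientGroup.eq_one_iff, Subgroup.mem_subgroupOf]
    simp only [k1, k2, Subgroup.mem_prod, Subgroup.mem_comap, MonoidHom.inl_apply,
      MonoidHom.inr_apply, g]
    constructor
    · intro h1
      refine ⟨h1, ?_⟩
      have : ((1 : G), (x : G × H).2) = ((x : G × H).1, (1 : H))⁻¹ * (x : G × H) := by
        ext <;> simp
      rw [this]
      exact X.mul_mem (X.inv_mem h1) x.2
    · exact fun h => h.1
  exact ⟨(QuotientGroup.quotientMulEquivOfEq hker.symm).trans
    (QuotientGroup.quotientKerEquivOfSurjective f hsurj), fun x => rfl⟩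

end
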